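/- arXiv:1611.05818 — 2 statements merged into one kernel-verified Lean document; each statement's English description precedes it below -/
import Mathlib

section
/- If P is an additively homogeneous closed subset of 2^ω with constant c (i.e., |θ_P(σ) − θ_P(τ)| ≤ c whenever σ, τ ∈ T_P have the same length), then for every n and every σ ∈ T_P↾n, |θ_P(σ) − log₂ #(T_P↾n)| ≤ c. -/
open MeasureTheory Filter

noncomputable section

/-- The cylinder (basic clopen set) determined by a finite binary string. -/
def cyl (σ : List Bool) : Set (ℕ → Bool) :=
  {X | ∀ i, i < σ.length → X i = σ.getD i false}

/-- σ is an extendible node of P, i.e. σ ∈ T_P. -/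
def extn (P : Set (ℕ → Bool)) (σ : List Bool) : Prop :=
  (cyl σ ∩ P).Nonempty

/-- The level-n strings of the tree of extendible nodes, T_P ↾ n. -/
def level (P : Set (ℕ → Bool)) (n : ℕ) : Set (List Bool) :=
  {σ | σ.length = n ∧ extn P σ}

/-- #(T_P ↾ n). -/
def levelCard (P : Set (ℕ → Bool)) (n : ℕ) : ℕ :=
  (level P n).ncard

/-- The clopen set [T_P ↾ n] generated by the level-n extendible nodes. -/
def levelUnion (P : Set (ℕ → Bool)) (n : ℕ) : Set (ℕ → Bool) :=
  ⋃ σ ∈ level P n, cyl σ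

/-- The prefix of σ of length m+1 with its last bit flipped, i.e. (σ↾(m+1))^↷. -/
def flipAt (σ : List Bool) (m : ℕ) : List Bool :=
  σ.take m ++ [!σ.getD m false]

/-- θ_P(σ): the number of initial segments of σ whose last-bit-flipped sibling is in T_P. -/
def theta (P : Set (ℕ → Bool)) (σ : List Bool) : ℕ :=
  {m | m < σ.length ∧ extn P (flipAt σ m)}.ncard

/-- The number of extensions of σ in T_P ↾ n. -/
def extCard (P : Set (ℕ → Bool)) (σ : List Bool) (n : ℕ) : ℕ :=
  {τ | τ.length = n ∧ extn P τ ∧ σ <+: τ}.ncard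

/-- X ↾ n as a finite string. -/
def prefixList (X : ℕ → Bool) (n : ℕ) : List Bool :=
  List.ofFn (fun i : Fin n => X i)

/-- Interleaving X ⊕ Y of two infinite sequences. -/
def seqInterleave (X Y : ℕ → Bool) : ℕ → Bool :=
  fun n => if n % 2 = 0 then X (n / 2) else Y (n / 2)

/-- Interleaving σ ⊕ τ of two finite strings (of equal length). -/
def interleave : List Bool → List Bool → List Bool
  | a :: σ, b :: τ => a :: b :: interleave σ τ
  | _, _ => []

/-- The product P₀ ⊗ P₁ = {X ⊕ Y : X ∈ P₀, Y ∈ P₁}. -/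
def prodClass (P₀ P₁ : Set (ℕ → Bool)) : Set (ℕ → Bool) :=
  {Z | ∃ X ∈ P₀, ∃ Y ∈ P₁, Z = seqInterleave X Y}


/-!
The weights `2^(-θ_P(τ))` of the nodes `τ ∈ T_P ↾ n` always sum to `1`: a node with two
extendible children hands half of its weight to each (each child gains one extendible flipped
sibling), and a node with a single extendible child hands on all of it. By homogeneity every
weight at level `n` lies within a factor `2^c` of `2^(-θ_P(σ))`, which bounds the number of
nodes from both sides.
-/

open scoped Classical

section

variable (P : Set (ℕ → Bool))

lemma flipAt_append_of_lt (σ : List Bool) (b : Bool) {m : ℕ} (hm : m < σ.length) :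
    flipAt (σ ++ [b]) m = flipAt σ m := by
  rw [flipAt, flipAt, List.take_append_of_le_length hm.le, List.getD_append _ _ _ _ hm]

lemma flipAt_append_length (σ : List Bool) (b : Bool) :
    flipAt (σ ++ [b]) σ.length = σ ++ [!b] := by
  simp [flipAt]

lemma theta_eq_card_filter (σ : List Bool) :
    theta P σ = ((Finset.range σ.length).filter fun m => extn P (flipAt σ m)).card := by
  rw [theta, ← Set.ncard_coe_finset]
  congr 1
  ext m
  simp

lemma theta_append (σ : List Bool) (b : Bool) :
    theta P (σ ++ [b]) = theta P σ + if extn P (σ ++ [!b]) then 1 else 0 := by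
  rw [theta_eq_card_filter, theta_eq_card_filter, List.length_append, List.length_singleton,
    Finset.range_add_one, Finset.filter_insert, flipAt_append_length,
    Finset.filter_congr fun m hm => by rw [flipAt_append_of_lt σ b (Finset.mem_range.mp hm)]]
  split_ifs <;> simp [Finset.card_insert_of_notMem]

lemma extn_of_extn_append {σ : List Bool} {b : Bool} (h : extn P (σ ++ [b])) : extn P σ := by
  obtain ⟨X, hX, hXP⟩ := h
  refine ⟨X, fun i hi => ?_, hXP⟩
  rw [hX i (by simp; omega), List.getD_append _ _ _ _ hi]

lemma exists_extn_append {σ : List Bool} (h : extn P σ) : ∃ b, extn P (σ ++ [b]) := by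
  obtain ⟨X, hX, hXP⟩ := h
  refine ⟨X σ.length, X, fun i hi => ?_, hXP⟩
  rcases (Nat.lt_succ_iff.mp (by simpa using hi)).lt_or_eq with hi | rfl
  · rw [List.getD_append _ _ _ _ hi]
    exact hX i hi
  · simp

lemma level_finite (n : ℕ) : (level P n).Finite :=
  (List.finite_length_eq Bool n).subset fun _ hσ => hσ.1

def levelFinset (n : ℕ) : Finset (List Bool) :=
  (level_finite P n).toFinset

@[simp]
lemma mem_levelFinset {n : ℕ} {σ : List Bool} :
    σ ∈ levelFinset P n ↔ σ.length = n ∧ extn P σ := by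
  simp [levelFinset, level]

lemma levelCard_eq_card (n : ℕ) : levelCard P n = (levelFinset P n).card :=
  Set.ncard_eq_toFinset_card _ (level_finite P n)

lemma levelFinset_zero (hP : P.Nonempty) : levelFinset P 0 = {[]} := by
  ext σ
  simp only [mem_levelFinset, List.length_eq_zero_iff, Finset.mem_singleton,
    and_iff_left_iff_imp]
  rintro rfl
  exact hP.imp fun X hX => ⟨fun i hi => absurd hi (Nat.not_lt_zero i), hX⟩

lemma levelFinset_succ (n : ℕ) :
    levelFinset P (n + 1) = ((levelFinset P n ×ˢ Finset.univ).filter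
      fun p => extn P (p.1 ++ [p.2])).image fun p => p.1 ++ [p.2] := by
  ext τ
  simp only [mem_levelFinset, Finset.mem_image, Finset.mem_filter, Finset.mem_product,
    Finset.mem_univ, and_true, Prod.exists]
  constructor
  · rintro ⟨hlen, hτ⟩
    obtain ⟨σ, b, rfl⟩ : ∃ σ b, τ = σ ++ [b] :=
      ⟨τ.dropLast, τ.getLast (List.ne_nil_of_length_eq_add_one hlen),
        (List.dropLast_append_getLast _).symm⟩
    exact ⟨σ, b, ⟨⟨by simpa using hlen, extn_of_extn_append P hτ⟩, hτ⟩, rfl⟩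
  · rintro ⟨σ, b, ⟨⟨hlen, -⟩, hτ⟩, rfl⟩
    exact ⟨by simp [hlen], hτ⟩

lemma sum_levelFinset_succ {M : Type*} [AddCommMonoid M] (f : List Bool → M) (n : ℕ) :
    ∑ τ ∈ levelFinset P (n + 1), f τ =
      ∑ σ ∈ levelFinset P n, ∑ b : Bool, if extn P (σ ++ [b]) then f (σ ++ [b]) else 0 := by
  rw [levelFinset_succ, Finset.sum_image fun p _ q _ h => Prod.ext_iff.mpr (by simpa using h),
    Finset.sum_filter, Finset.sum_product]

lemma sum_children_inv_two_pow_theta {σ : List Bool} (hσ : extn P σ) :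
    ∑ b : Bool, (if extn P (σ ++ [b]) then ((2 : ℚ) ^ theta P (σ ++ [b]))⁻¹ else 0) =
      ((2 : ℚ) ^ theta P σ)⁻¹ := by
  obtain ⟨b, hb⟩ := exists_extn_append P hσ
  simp only [Fintype.sum_bool, theta_append, Bool.not_true, Bool.not_false]
  by_cases h0 : extn P (σ ++ [false]) <;> by_cases h1 : extn P (σ ++ [true])
  · simp only [h0, h1, if_true, pow_succ]
    ring
  · simp [h0, h1]
  · simp [h0, h1]
  · cases b <;> contradiction

theorem sum_levelFinset_inv_two_pow_theta (hP : P.Nonempty) (n : ℕ) :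
    ∑ τ ∈ levelFinset P n, ((2 : ℚ) ^ theta P τ)⁻¹ = 1 := by
  induction n with
  | zero => simp [levelFinset_zero P hP, theta]
  | succ n ih =>
    rw [sum_levelFinset_succ, ← ih]
    exact Finset.sum_congr rfl fun σ hσ =>
      sum_children_inv_two_pow_theta P ((mem_levelFinset P).mp hσ).2

lemma levelCard_le_two_pow (hP : P.Nonempty) {n k : ℕ} (h : ∀ τ ∈ level P n, theta P τ ≤ k) :
    levelCard P n ≤ 2 ^ k := by
  have hsum : (levelCard P n : ℚ) * ((2 : ℚ) ^ k)⁻¹ ≤ 1 := by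
    rw [← sum_levelFinset_inv_two_pow_theta P hP n, levelCard_eq_card, ← nsmul_eq_mul]
    exact Finset.card_nsmul_le_sum _ _ _ fun τ hτ => inv_anti₀ (by positivity)
      (pow_le_pow_right₀ one_le_two (h τ ((mem_levelFinset P).mp hτ)))
  rw [← div_eq_mul_inv, div_le_one (by positivity)] at hsum
  exact_mod_cast hsum

lemma two_pow_le_levelCard_mul (hP : P.Nonempty) {n k c : ℕ}
    (h : ∀ τ ∈ level P n, k ≤ theta P τ + c) : 2 ^ k ≤ levelCard P n * 2 ^ c := by
  have hsum : 1 ≤ (levelCard P n : ℚ) * (2 ^ c / 2 ^ k) := by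
    rw [← sum_levelFinset_inv_two_pow_theta P hP n, levelCard_eq_card, ← nsmul_eq_mul]
    refine Finset.sum_le_card_nsmul _ _ _ fun τ hτ => ?_
    calc ((2 : ℚ) ^ theta P τ)⁻¹ = 2 ^ c / 2 ^ (theta P τ + c) := by
          rw [pow_add]; field_simp
      _ ≤ 2 ^ c / 2 ^ k := div_le_div_of_nonneg_left (by positivity) (by positivity)
          (pow_le_pow_right₀ one_le_two (h τ ((mem_levelFinset P).mp hτ)))
  rw [mul_div_assoc', le_div_iff₀ (by positivity), one_mul] at hsum
  exact_mod_cast hsum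

end

theorem stmt5_general (P : Set (ℕ → Bool)) (c : ℕ)
    (hhom : ∀ σ τ : List Bool, extn P σ → extn P τ → σ.length = τ.length →
      |(theta P σ : ℤ) - (theta P τ : ℤ)| ≤ c)
    (n : ℕ) (σ : List Bool) (hσ : σ ∈ level P n) :
    levelCard P n ≤ 2 ^ (theta P σ + c) ∧ 2 ^ theta P σ ≤ levelCard P n * 2 ^ c := by
  obtain ⟨hlen, hext⟩ := hσ
  have hP : P.Nonempty := hext.mono Set.inter_subset_right
  have hclose : ∀ τ ∈ level P n, theta P τ ≤ theta P σ + c ∧ theta P σ ≤ theta P τ + c := by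
    rintro τ ⟨hτlen, hτ⟩
    have := abs_le.mp (hhom σ τ hext hτ (hlen.trans hτlen.symm))
    omega
  exact ⟨levelCard_le_two_pow P hP fun τ hτ => (hclose τ hτ).1,
    two_pow_le_levelCard_mul P hP fun τ hτ => (hclose τ hτ).2⟩

theorem stmt5 (P : Set (ℕ → Bool)) (hPne : P.Nonempty) (hPc : IsClosed P) (c : ℕ)
    (hhom : ∀ σ τ : List Bool, extn P σ → extn P τ → σ.length = τ.length →
      |(theta P σ : ℤ) - (theta P τ : ℤ)| ≤ c)
    (n : ℕ) (σ : List Bool) (hσ : σ ∈ level P n) :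
    levelCard P n ≤ 2 ^ (theta P σ + c) ∧ 2 ^ theta P σ ≤ levelCard P n * 2 ^ c :=
  stmt5_general P c hhom n σ hσ
end
end

section
/- Let P be a weakly m-homogeneous closed subset of 2^ω, with c_k the common number of extensions in T_P of length m(k+1) of any node of length mk. Then for any closed Q ⊆ P, any k, i ∈ ω and s, t < m: #(T_Q↾(m(k+i)+t)) / #(T_Q↾(mk+s)) ≤ 2^{2m} · #(T_P↾(m(k+i)+t)) / #(T_P↾(mk+s)). In particular every weakly m-homogeneous class satisfies condition (†) of VL-homogeneity with constant 2^{2m}. -/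
/-!
Counting `T_Q ↾ n'` fibrewise over `T_Q ↾ n` shows that it is squeezed between the minimal and
maximal number of extensions of a node. A node of `T_Q` has at most `2 ^ t` extensions `t` levels
up and, from level `m k` to `m (k + 1)`, at most the `c k` extensions it has in `T_P`, while a node
of `T_P` at level `m k` has exactly `c k`. Hence
`#(T_Q ↾ (m (k + i) + t)) ≤ 2 ^ t ⬝ c_k ⋯ c_{k+i-1} ⬝ #(T_Q ↾ (m k + s))` and
`c_k ⋯ c_{k+i-1} ⬝ #(T_P ↾ (m k + s)) ≤ 2 ^ s ⬝ #(T_P ↾ (m (k + i) + t))`; multiplying the two,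
the products of the `c_j` cancel and `2 ^ (s + t) ≤ 2 ^ (2 m)`.
-/

open MeasureTheory Filter

noncomputable section

lemma level_finite_s15 (Q : Set (ℕ → Bool)) (n : ℕ) : (level Q n).Finite :=
  (List.finite_length_eq Bool n).subset fun _ h => h.1

lemma extn_of_prefix {Q : Set (ℕ → Bool)} {σ τ : List Bool} (h : σ <+: τ) (hτ : extn Q τ) :
    extn Q σ := by
  obtain ⟨X, hXτ, hXQ⟩ := hτ
  refine ⟨X, fun i hi => ?_, hXQ⟩
  obtain ⟨ρ, rfl⟩ := h
  rw [hXτ i (by simp; omega), List.getD_append _ _ _ _ hi]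

lemma extn_mono {Q P : Set (ℕ → Bool)} (h : Q ⊆ P) {σ : List Bool} (hσ : extn Q σ) :
    extn P σ :=
  hσ.mono (Set.inter_subset_inter_right _ h)

lemma mem_cyl_prefixList (X : ℕ → Bool) (n : ℕ) : X ∈ cyl (prefixList X n) := by
  intro i hi
  simp_all [prefixList]

lemma prefix_prefixList {X : ℕ → Bool} {σ : List Bool} (hX : X ∈ cyl σ) {n : ℕ}
    (h : σ.length ≤ n) : σ <+: prefixList X n := by
  rw [List.prefix_iff_eq_take]
  refine List.ext_getElem (by simp [prefixList, h]) fun i hi _ => ?_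
  simp [prefixList, hX i hi, List.getElem?_eq_getElem hi]

lemma levelCard_eq_sum_extCard (Q : Set (ℕ → Bool)) {n n' : ℕ} (h : n ≤ n') :
    levelCard Q n' = ∑ σ ∈ (level_finite_s15 Q n).toFinset, extCard Q σ n' := by
  classical
  have hmaps : ((level_finite_s15 Q n').toFinset : Set (List Bool)).MapsTo (List.take n)
      (level_finite_s15 Q n).toFinset := by
    intro τ hτ
    simp only [Finset.mem_coe, Set.Finite.mem_toFinset] at hτ ⊢
    exact ⟨by simp [hτ.1, h], extn_of_prefix (List.take_prefix _ _) hτ.2⟩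
  rw [levelCard, Set.ncard_eq_toFinset_card _ (level_finite_s15 Q n'),
    Finset.card_eq_sum_card_fiberwise hmaps]
  refine Finset.sum_congr rfl fun σ hσ => ?_
  rw [Set.Finite.mem_toFinset] at hσ
  rw [extCard, ← Set.ncard_coe_finset]
  congr 1
  ext τ
  simp only [Finset.coe_filter, Set.Finite.mem_toFinset, level, Set.mem_ofPred_eq,
    List.prefix_iff_eq_take, hσ.1]
  constructor
  · rintro ⟨⟨hlen, hext⟩, rfl⟩
    exact ⟨hlen, hext, rfl⟩
  · rintro ⟨hlen, hext, rfl⟩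
    exact ⟨⟨hlen, hext⟩, rfl⟩

lemma levelCard_le_mul {Q : Set (ℕ → Bool)} {n n' b : ℕ} (h : n ≤ n')
    (hb : ∀ σ ∈ level Q n, extCard Q σ n' ≤ b) : levelCard Q n' ≤ b * levelCard Q n := by
  rw [levelCard_eq_sum_extCard Q h, levelCard, Set.ncard_eq_toFinset_card _ (level_finite_s15 Q n),
    mul_comm, ← smul_eq_mul]
  exact Finset.sum_le_card_nsmul _ _ _ fun σ hσ => hb σ ((level_finite_s15 Q n).mem_toFinset.1 hσ)

lemma mul_le_levelCard {Q : Set (ℕ → Bool)} {n n' b : ℕ} (h : n ≤ n')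
    (hb : ∀ σ ∈ level Q n, b ≤ extCard Q σ n') : b * levelCard Q n ≤ levelCard Q n' := by
  rw [levelCard_eq_sum_extCard Q h, levelCard, Set.ncard_eq_toFinset_card _ (level_finite_s15 Q n),
    mul_comm, ← smul_eq_mul]
  exact Finset.card_nsmul_le_sum _ _ _ fun σ hσ => hb σ ((level_finite_s15 Q n).mem_toFinset.1 hσ)

lemma extCard_set_finite (Q : Set (ℕ → Bool)) (σ : List Bool) (n : ℕ) :
    {τ : List Bool | τ.length = n ∧ extn Q τ ∧ σ <+: τ}.Finite :=
  (List.finite_length_eq Bool n).subset fun _ h => h.1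

lemma extCard_mono {Q P : Set (ℕ → Bool)} (hQP : Q ⊆ P) (σ : List Bool) (n : ℕ) :
    extCard Q σ n ≤ extCard P σ n :=
  Set.ncard_le_ncard (fun _ ⟨hlen, hext, hpre⟩ => ⟨hlen, extn_mono hQP hext, hpre⟩)
    (extCard_set_finite P σ n)

lemma one_le_extCard {Q : Set (ℕ → Bool)} {σ : List Bool} (hσ : extn Q σ) {n : ℕ}
    (h : σ.length ≤ n) : 1 ≤ extCard Q σ n := by
  obtain ⟨X, hXσ, hXQ⟩ := hσ
  have hX : prefixList X n ∈ {τ : List Bool | τ.length = n ∧ extn Q τ ∧ σ <+: τ} :=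
    ⟨by simp [prefixList], ⟨X, mem_cyl_prefixList X n, hXQ⟩, prefix_prefixList hXσ h⟩
  exact Nat.one_le_iff_ne_zero.2 (Set.ncard_ne_zero_of_mem hX (extCard_set_finite Q σ n))

lemma extCard_succ_le_two (Q : Set (ℕ → Bool)) (σ : List Bool) :
    extCard Q σ (σ.length + 1) ≤ 2 := by
  have hsub : {τ | τ.length = σ.length + 1 ∧ extn Q τ ∧ σ <+: τ} ⊆
      {σ ++ [false], σ ++ [true]} := by
    rintro τ ⟨hlen, -, ρ, rfl⟩
    obtain ⟨b, rfl⟩ : ∃ b, ρ = [b] := List.length_eq_one_iff.1 (by simpa using hlen)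
    cases b <;> simp
  exact (Set.ncard_le_ncard hsub).trans (Set.ncard_pair (by simp)).le

lemma levelCard_mono (Q : Set (ℕ → Bool)) {n n' : ℕ} (h : n ≤ n') :
    levelCard Q n ≤ levelCard Q n' := by
  simpa using mul_le_levelCard h fun σ hσ => one_le_extCard hσ.2 (hσ.1 ▸ h)

lemma levelCard_add_le (Q : Set (ℕ → Bool)) (n j : ℕ) :
    levelCard Q (n + j) ≤ 2 ^ j * levelCard Q n := by
  induction j with
  | zero => simp
  | succ j ih =>
    calc levelCard Q (n + j + 1)
        ≤ 2 * levelCard Q (n + j) :=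
          levelCard_le_mul (by omega) fun σ hσ => hσ.1 ▸ extCard_succ_le_two Q σ
      _ ≤ 2 ^ (j + 1) * levelCard Q n := by rw [pow_succ', mul_assoc]; omega

def WeaklyHomogeneous (P : Set (ℕ → Bool)) (m : ℕ) (c : ℕ → ℕ) : Prop :=
  ∀ (k : ℕ) (σ : List Bool), σ ∈ level P (m * k) → extCard P σ (m * (k + 1)) = c k

namespace WeaklyHomogeneous

variable {P Q : Set (ℕ → Bool)} {m : ℕ} {c : ℕ → ℕ}

lemma levelCard_succ (hP : WeaklyHomogeneous P m c) (k : ℕ) :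
    levelCard P (m * (k + 1)) = c k * levelCard P (m * k) :=
  have h : m * k ≤ m * (k + 1) := Nat.mul_le_mul_left m k.le_succ
  (levelCard_le_mul h fun σ hσ => (hP k σ hσ).le).antisymm
    (mul_le_levelCard h fun σ hσ => (hP k σ hσ).ge)

lemma levelCard_succ_le_of_subset (hP : WeaklyHomogeneous P m c) (hQP : Q ⊆ P) (k : ℕ) :
    levelCard Q (m * (k + 1)) ≤ c k * levelCard Q (m * k) :=
  levelCard_le_mul (Nat.mul_le_mul_left m k.le_succ) fun σ hσ =>
    (extCard_mono hQP σ _).trans (hP k σ ⟨hσ.1, extn_mono hQP hσ.2⟩).le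

lemma levelCard_add (hP : WeaklyHomogeneous P m c) (k i : ℕ) :
    levelCard P (m * (k + i)) = (∏ j ∈ Finset.range i, c (k + j)) * levelCard P (m * k) := by
  induction i with
  | zero => simp
  | succ i ih =>
    rw [← add_assoc, hP.levelCard_succ, ih, Finset.prod_range_succ]
    ring

lemma levelCard_add_le_of_subset (hP : WeaklyHomogeneous P m c) (hQP : Q ⊆ P) (k i : ℕ) :
    levelCard Q (m * (k + i)) ≤ (∏ j ∈ Finset.range i, c (k + j)) * levelCard Q (m * k) := by
  induction i with
  | zero => simp
  | succ i ih =>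
    calc levelCard Q (m * (k + i + 1))
        ≤ c (k + i) * levelCard Q (m * (k + i)) := hP.levelCard_succ_le_of_subset hQP _
      _ ≤ c (k + i) * ((∏ j ∈ Finset.range i, c (k + j)) * levelCard Q (m * k)) := by gcongr
      _ = (∏ j ∈ Finset.range (i + 1), c (k + j)) * levelCard Q (m * k) := by
        rw [Finset.prod_range_succ]; ring

end WeaklyHomogeneous

theorem stmt15_general (P : Set (ℕ → Bool))
    (m : ℕ) (c : ℕ → ℕ)
    (hhom : ∀ (k : ℕ) (σ : List Bool), σ ∈ level P (m * k) →
      extCard P σ (m * (k + 1)) = c k) :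
    ∀ Q : Set (ℕ → Bool), IsClosed Q → Q ⊆ P → ∀ k i s t : ℕ, s < m → t < m →
      levelCard Q (m * (k + i) + t) * levelCard P (m * k + s) ≤
        2 ^ (2 * m) * (levelCard P (m * (k + i) + t) * levelCard Q (m * k + s)) := by
  intro Q _ hQP k i s t hs ht
  have hP : WeaklyHomogeneous P m c := hhom
  set C := ∏ j ∈ Finset.range i, c (k + j)
  calc levelCard Q (m * (k + i) + t) * levelCard P (m * k + s)
      ≤ (2 ^ t * (C * levelCard Q (m * k))) * (2 ^ s * levelCard P (m * k)) := by
        gcongr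
        · exact (levelCard_add_le Q _ t).trans
            (Nat.mul_le_mul_left _ (hP.levelCard_add_le_of_subset hQP k i))
        · exact levelCard_add_le P _ s
    _ = 2 ^ (s + t) * (levelCard P (m * (k + i)) * levelCard Q (m * k)) := by
        rw [hP.levelCard_add, pow_add]; ring
    _ ≤ 2 ^ (2 * m) * (levelCard P (m * (k + i) + t) * levelCard Q (m * k + s)) := by
        gcongr
        · norm_num
        · omega
        · exact levelCard_mono P (Nat.le_add_right _ t)
        · exact levelCard_mono Q (Nat.le_add_right _ s)

theorem stmt15 (P : Set (ℕ → Bool)) (hPne : P.Nonempty) (hPc : IsClosed P)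
    (m : ℕ) (c : ℕ → ℕ)
    (hhom : ∀ (k : ℕ) (σ : List Bool), σ ∈ level P (m * k) →
      extCard P σ (m * (k + 1)) = c k) :
    ∀ Q : Set (ℕ → Bool), IsClosed Q → Q ⊆ P → ∀ k i s t : ℕ, s < m → t < m →
      levelCard Q (m * (k + i) + t) * levelCard P (m * k + s) ≤
        2 ^ (2 * m) * (levelCard P (m * (k + i) + t) * levelCard Q (m * k + s)) :=
  stmt15_general P m c hhom
end
end
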